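/- arXiv:2110.07763 — 8 statements merged into one kernel-verified Lean document; each statement's English description precedes it below -/
import Mathlib

section
/- Let X be a set and G a group of permutations of X. Let P and Q be finite subsets of X such that no point of P has a finite G-orbit. Then there exists g ∈ G such that g·P ∩ Q = ∅. -/
/-!
If every `g ∈ G` sent some point of `P` into `Q`, then `G` would be covered by the finitely
many sets `{g | g • p = q}` with `p ∈ P`, `q ∈ Q`. Each nonempty one is a left coset of the
stabilizer of `p`, so by B. H. Neumann's lemma on coset covers some stabilizer `G_p` has finite
index, that is, the orbit of `p` is finite.
-/

open Pointwise

namespace MulAction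

variable {G X : Type*} [Group G] [MulAction G X]

theorem finite_orbit_of_finiteIndex_stabilizer {x : X} (h : (stabilizer G x).FiniteIndex) :
    (orbit G x).Finite :=
  Set.finite_of_ncard_ne_zero (index_stabilizer G x ▸ h.index_ne_zero)

theorem mem_smul_stabilizer_of_smul_eq {g h : G} {x : X} (hgh : g • x = h • x) :
    g ∈ h • (stabilizer G x : Set G) := by
  rw [mem_leftCoset_iff, SetLike.mem_coe, mem_stabilizer_iff, mul_smul, hgh, inv_smul_smul]

theorem exists_finite_orbit_of_forall_exists_smul_mem {P Q : Finset X}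
    (hPQ : ∀ g : G, ∃ p ∈ P, g • p ∈ Q) : ∃ p ∈ P, (orbit G p).Finite := by
  classical
  set s := (P ×ˢ Q).filter fun pq => pq.2 ∈ orbit G pq.1
  choose! transport htransport using
    fun pq (hpq : pq ∈ s) => mem_orbit_iff.mp (Finset.mem_filter.mp hpq).2
  have hcovers : ⋃ pq ∈ s, transport pq • (stabilizer G pq.1 : Set G) = Set.univ := by
    refine Set.eq_univ_of_forall fun g => ?_
    obtain ⟨p, hp, hq⟩ := hPQ g
    have hs : (p, g • p) ∈ s :=
      Finset.mem_filter.mpr ⟨Finset.mem_product.mpr ⟨hp, hq⟩, mem_orbit p g⟩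
    exact Set.mem_biUnion hs (mem_smul_stabilizer_of_smul_eq (htransport _ hs).symm)
  obtain ⟨pq, hpq, hfin⟩ := Subgroup.exists_finiteIndex_of_leftCoset_cover hcovers
  exact ⟨pq.1, (Finset.mem_product.mp (Finset.mem_filter.mp hpq).1).1,
    finite_orbit_of_finiteIndex_stabilizer hfin⟩

end MulAction

/-- P. M. Neumann's Lemma: if `G` acts on `X` and `P, Q` are finite subsets of `X`
such that no point of `P` has a finite orbit, then some `g ∈ G` moves `P` off `Q`. -/
theorem pm_neumann {X G : Type*} [Group G] [MulAction G X] (P Q : Finset X)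
    (hP : ∀ p ∈ P, ¬ (MulAction.orbit G p).Finite) :
    ∃ g : G, Disjoint ((fun x => g • x) '' (P : Set X)) (Q : Set X) := by
  by_contra! hmeets
  have hPQ : ∀ g : G, ∃ p ∈ P, g • p ∈ Q := fun g => by
    obtain ⟨_, ⟨p, hp, rfl⟩, hq⟩ := Set.not_disjoint_iff.mp (hmeets g)
    exact ⟨p, hp, hq⟩
  obtain ⟨p, hp, hfin⟩ := MulAction.exists_finite_orbit_of_forall_exists_smul_mem hPQ
  exact hP p hp hfin
end

section
/- Let G be a group covered by finitely many left cosets g₁H₁, ..., gₙHₙ of (possibly distinct) subgroups H₁, ..., Hₙ. Then at least one of the subgroups Hᵢ has finite index in G. -/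
open scoped Pointwise

/-- B. H. Neumann's Lemma: if a group is covered by finitely many left cosets of
subgroups, then one of the subgroups has finite index. -/
theorem bh_neumann {G : Type*} [Group G] (n : ℕ) (g : Fin n → G) (H : Fin n → Subgroup G)
    (hcover : ∀ x : G, ∃ i : Fin n, x ∈ (fun h => g i * h) '' (H i : Set G)) :
    ∃ i : Fin n, (H i).FiniteIndex := by
  have hcovers : ⋃ i ∈ Finset.univ, g i • (H i : Set G) = Set.univ :=
    Set.eq_univ_of_forall fun x =>
      let ⟨i, hi⟩ := hcover x
      Set.mem_iUnion₂.2 ⟨i, Finset.mem_univ i, hi⟩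
  obtain ⟨i, -, hi⟩ := Subgroup.exists_finiteIndex_of_leftCoset_cover hcovers
  exact ⟨i, hi⟩
end

section
/- Let X be a metric space and G a group of isometries of X. Let P, Q ⊆ X be finite sets, and suppose that for each p ∈ P there is ε_p > 0 such that the orbit G·p is not ε_p-bounded (i.e., G·p admits no finite ε_p-net). Then there exists g ∈ G such that for every p ∈ P, the distance d(g·p, Q) ≥ ε_p/3. -/
/-! Neumann's coset-covering argument, with the cosets `{g | g • p = x}` of point stabilisers
replaced by the approximate cosets `A(p, x) = {g | d(g • p, x) < δ p}`. Suppose finitely many of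
them cover `G`. If the orbit of `a` is not `3 δ a`-bounded, some `g₀ • a` is `3 δ a`-far from the
centre `x` of every coset `A(a, x)` of the cover. For `g, h ∈ A(a, x)` the point `(g₀ h⁻¹ g) • a`
is within `2 δ a` of `g₀ • a`, so `g₀ h⁻¹ g` lies in a coset attached to another point, and
translating by `h g₀⁻¹` covers `A(a, x)` by cosets attached to the other points. Eliminating the
points one by one leaves an empty cover, which is absurd. The theorem is the case `δ = ε / 3`. -/

/-- `S` is `ε`-bounded if it is covered by finitely many open `ε`-balls. -/
def EBounded {X : Type*} [MetricSpace X] (S : Set X) (ε : ℝ) : Prop :=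
  ∃ F : Finset X, S ⊆ ⋃ x ∈ F, Metric.ball x ε

open MulAction

def approxCoset (G : Type*) {X : Type*} [PseudoMetricSpace X] [SMul G X] (δ : ℝ) (p x : X) :
    Set G :=
  {g | dist (g • p) x < δ}

theorem exists_smul_forall_le_dist_of_not_eBounded {X G : Type*} [MetricSpace X] [SMul G X]
    {a : X} {r : ℝ} (ha : ¬ EBounded (orbit G a) r) (T : Finset X) :
    ∃ g : G, ∀ x ∈ T, r ≤ dist (g • a) x := by
  by_contra! h
  refine ha ⟨T, ?_⟩
  rintro _ ⟨g, rfl⟩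
  obtain ⟨x, hx, hlt⟩ := h g
  exact Set.mem_biUnion hx (Metric.mem_ball.mpr hlt)

section IsometricAction

variable {X G : Type*} [Group G] [MulAction G X]

section Pseudo

variable [PseudoMetricSpace X] [IsIsometricSMul G X]

theorem mem_approxCoset_smul {δ : ℝ} {p x : X} {g k : G} :
    g ∈ approxCoset G δ p (k • x) ↔ k⁻¹ * g ∈ approxCoset G δ p x := by
  simp only [approxCoset, Set.mem_ofPred_eq, mul_smul]
  rw [← dist_smul k (k⁻¹ • g • p) x, smul_inv_smul]

theorem dist_mul_inv_mul_smul_lt {δ : ℝ} {a x : X} {g h : G} (hg : g ∈ approxCoset G δ a x)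
    (hh : h ∈ approxCoset G δ a x) (g₀ : G) :
    dist ((g₀ * h⁻¹ * g) • a) (g₀ • a) < 2 * δ := by
  rw [mul_assoc, mul_smul, dist_smul, mul_smul, ← dist_smul h, smul_inv_smul]
  have := dist_triangle_right (g • a) (h • a) x
  simp only [approxCoset, Set.mem_ofPred_eq] at hg hh
  linarith

end Pseudo

variable [MetricSpace X] [IsIsometricSMul G X]

theorem exists_mem_approxCoset_mul_inv_smul (δ : X → ℝ) {D : Finset (X × X)} {a x : X}
    {g₀ g h : G} (hD : ∀ k : G, dist (k • a) (g₀ • a) < 2 * δ a →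
      ∃ d ∈ D, k ∈ approxCoset G (δ d.1) d.1 d.2)
    (hg : g ∈ approxCoset G (δ a) a x) (hh : h ∈ approxCoset G (δ a) a x) :
    ∃ d ∈ D, g ∈ approxCoset G (δ d.1) d.1 ((h * g₀⁻¹) • d.2) := by
  simp only [mem_approxCoset_smul, mul_inv_rev, inv_inv]
  exact hD _ (dist_mul_inv_mul_smul_lt hg hh g₀)

theorem exists_cover_forall_fst_ne (δ : X → ℝ) {a : X} (ha : ¬ EBounded (orbit G a) (3 * δ a))
    {s : Set X} {C : Finset (X × X)} (hC : ∀ c ∈ C, c.1 ∈ s)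
    (hcov : ∀ g : G, ∃ c ∈ C, g ∈ approxCoset G (δ c.1) c.1 c.2) :
    ∃ C' : Finset (X × X), (∀ c ∈ C', c.1 ∈ s ∧ c.1 ≠ a) ∧
      ∀ g : G, ∃ c ∈ C', g ∈ approxCoset G (δ c.1) c.1 c.2 := by
  classical
  obtain ⟨g₀, hg₀⟩ := exists_smul_forall_le_dist_of_not_eBounded ha (C.image Prod.snd)
  set D := C.filter (·.1 ≠ a)
  have hD : ∀ c ∈ D, c.1 ∈ s ∧ c.1 ≠ a := fun c hc =>
    ⟨hC c (Finset.mem_filter.mp hc).1, (Finset.mem_filter.mp hc).2⟩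
  have hnear : ∀ g : G, dist (g • a) (g₀ • a) < 2 * δ a →
      ∃ d ∈ D, g ∈ approxCoset G (δ d.1) d.1 d.2 := by
    intro g hg
    obtain ⟨c, hc, hgc⟩ := hcov g
    refine ⟨c, Finset.mem_filter.mpr ⟨hc, fun hca => ?_⟩, hgc⟩
    rw [approxCoset, Set.mem_ofPred_eq, hca] at hgc
    have := hg₀ c.2 (Finset.mem_image_of_mem _ hc)
    have := dist_triangle (g₀ • a) (g • a) c.2
    rw [dist_comm] at hg
    linarith
  set w : X × X → G := fun c => Classical.epsilon (· ∈ approxCoset G (δ a) a c.2)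
  refine ⟨D ∪ (C.filter (·.1 = a)).biUnion fun c => D.image fun d => (d.1, (w c * g₀⁻¹) • d.2),
    ?_, fun g => ?_⟩
  · intro c hc
    rcases Finset.mem_union.mp hc with hc | hc
    · exact hD c hc
    · obtain ⟨_, _, hc'⟩ := Finset.mem_biUnion.mp hc
      obtain ⟨d, hd, rfl⟩ := Finset.mem_image.mp hc'
      exact hD d hd
  obtain ⟨c, hc, hgc⟩ := hcov g
  by_cases hca : c.1 = a
  · rw [hca] at hgc
    obtain ⟨d, hd, hgd⟩ :=
      exists_mem_approxCoset_mul_inv_smul δ hnear hgc (Classical.epsilon_spec ⟨g, hgc⟩)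
    exact ⟨_, Finset.mem_union_right _ (Finset.mem_biUnion.mpr
      ⟨c, Finset.mem_filter.mpr ⟨hc, hca⟩, Finset.mem_image_of_mem _ hd⟩), hgd⟩
  · exact ⟨c, Finset.mem_union_left _ (Finset.mem_filter.mpr ⟨hc, hca⟩), hgc⟩

theorem exists_forall_notMem_approxCoset (δ : X → ℝ) (P : Finset X)
    (hP : ∀ p ∈ P, ¬ EBounded (orbit G p) (3 * δ p)) (C : Finset (X × X))
    (hC : ∀ c ∈ C, c.1 ∈ P) :
    ∃ g : G, ∀ c ∈ C, g ∉ approxCoset G (δ c.1) c.1 c.2 := by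
  classical
  induction P using Finset.induction_on generalizing C with
  | empty =>
    exact ⟨1, fun c hc => absurd (hC c hc) (Finset.notMem_empty _)⟩
  | insert a s _ ih =>
    by_contra! hcov
    obtain ⟨C', hC', hcov'⟩ :=
      exists_cover_forall_fst_ne δ (hP a (Finset.mem_insert_self a s)) (s := ↑(insert a s)) hC hcov
    obtain ⟨g, hg⟩ := ih (fun p hp => hP p (Finset.mem_insert_of_mem hp)) C'
      fun c hc => (Finset.mem_insert.mp (hC' c hc).1).resolve_left (hC' c hc).2
    obtain ⟨c, hc, hgc⟩ := hcov' g
    exact hg c hc hgc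

end IsometricAction

/-- Metric-space P. M. Neumann Lemma (Lemma 3.1): if `G` acts on `X` by isometries,
`P, Q ⊆ X` are finite, and for each `p ∈ P` the orbit of `p` is not `ε p`-bounded
(with `ε p > 0`), then some `g ∈ G` satisfies `d(g•p, Q) ≥ ε p / 3` for all `p ∈ P`. -/
theorem metric_pm_neumann {X G : Type*} [MetricSpace X] [Group G] [MulAction G X]
    (hiso : ∀ (g : G) (x y : X), dist (g • x) (g • y) = dist x y)
    (P Q : Finset X) (ε : X → ℝ)
    (hP : ∀ p ∈ P, 0 < ε p ∧ ¬ EBounded (MulAction.orbit G p) (ε p)) :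
    ∃ g : G, ∀ p ∈ P, ∀ q ∈ Q, ε p / 3 ≤ dist (g • p) q := by
  have : IsIsometricSMul G X := ⟨fun g => Isometry.of_dist_eq (hiso g)⟩
  have hP' : ∀ p ∈ P, ¬ EBounded (orbit G p) (3 * (ε p / 3)) := fun p hp => by
    rw [mul_div_cancel₀ _ three_ne_zero]
    exact (hP p hp).2
  obtain ⟨g, hg⟩ := exists_forall_notMem_approxCoset (fun p => ε p / 3) P hP' (P ×ˢ Q)
    fun c hc => (Finset.mem_product.mp hc).1
  exact ⟨g, fun p hp q hq => not_lt.mp (hg (p, q) (Finset.mem_product.mpr ⟨hp, hq⟩))⟩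
end

section
/- Let X be a metric space and G a group of isometries of X. Let C ⊆ X be a compact set such that no point of C has a totally bounded G-orbit. Then there is ε > 0 such that for every ε-bounded set D ⊆ X there exists g ∈ G with d(g·C, D) ≥ ε. -/
open Metric MulAction Pointwise

section

variable {X : Type*} [MetricSpace X]

theorem EBounded.mono {S : Set X} {ε ε' : ℝ} (h : EBounded S ε) (hε : ε ≤ ε') :
    EBounded S ε' :=
  let ⟨F, hF⟩ := h
  ⟨F, hF.trans <| Set.iUnion₂_mono fun _ _ => ball_subset_ball hε⟩

theorem totallyBounded_of_forall_eBounded {S : Set X} (h : ∀ ε > 0, EBounded S ε) :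
    TotallyBounded S :=
  totallyBounded_iff.2 fun ε hε =>
    let ⟨F, hF⟩ := h ε hε
    ⟨F, F.finite_toSet, hF⟩

theorem exists_finset_forall_exists_dist_smul_lt {G : Type*} [SMul G X] {A F : Finset X} {ρ : ℝ}
    (hcover : ∀ g : G, ∃ a ∈ A, ∃ x ∈ F, dist (g • a) x < ρ) :
    ∃ T : Finset G, ∀ g : G, ∃ a ∈ A, ∃ h ∈ T, dist (g • a) (h • a) < 2 * ρ := by
  classical
  set S := (A ×ˢ F).filter fun q => ∃ g : G, dist (g • q.1) q.2 < ρ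
  choose sel hsel using fun q (hq : q ∈ S) => (Finset.mem_filter.1 hq).2
  refine ⟨S.attach.image fun q => sel q.1 q.2, fun g => ?_⟩
  obtain ⟨a, ha, x, hx, hgx⟩ := hcover g
  have hq : (a, x) ∈ S := Finset.mem_filter.2 ⟨Finset.mem_product.2 ⟨ha, hx⟩, g, hgx⟩
  refine ⟨a, ha, sel _ hq, Finset.mem_image.2 ⟨⟨_, hq⟩, Finset.mem_attach _ _, rfl⟩, ?_⟩
  calc dist (g • a) (sel _ hq • a) ≤ dist (g • a) x + dist x (sel _ hq • a) := dist_triangle ..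
    _ < ρ + ρ := add_lt_add hgx (by rw [dist_comm]; exact hsel _ hq)
    _ = 2 * ρ := by ring

variable {G : Type*} [Group G] [MulAction G X] [IsIsometricSMul G X]

theorem EBounded.orbit_add_dist {a c : X} {δ : ℝ} (h : EBounded (orbit G c) δ) :
    EBounded (orbit G a) (δ + dist a c) := by
  obtain ⟨F, hF⟩ := h
  refine ⟨F, ?_⟩
  rintro _ ⟨g, rfl⟩
  obtain ⟨x, hxF, hx⟩ := Set.mem_iUnion₂.1 (hF (mem_orbit c g))
  refine Set.mem_iUnion₂.2 ⟨x, hxF, ?_⟩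
  calc dist (g • a) x ≤ dist (g • a) (g • c) + dist (g • c) x := dist_triangle _ _ _
    _ < dist a c + δ := by rw [dist_smul]; exact add_lt_add_right (mem_ball.1 hx) _
    _ = δ + dist a c := add_comm _ _

theorem IsCompact.exists_forall_not_eBounded_orbit {C : Set X} (hC : IsCompact C)
    (horb : ∀ a ∈ C, ¬TotallyBounded (orbit G a)) :
    ∃ δ > 0, ∀ a ∈ C, ¬EBounded (orbit G a) δ := by
  have hscale : ∀ a ∈ C, ∃ δ > 0, ¬EBounded (orbit G a) δ := fun a ha => by
    by_contra! h
    exact horb a ha (totallyBounded_of_forall_eBounded h)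
  choose! δ hδ hδorb using hscale
  obtain ⟨t, htC, hCt⟩ := hC.elim_nhds_subcover (fun a => ball a (δ a / 2))
    fun a ha => ball_mem_nhds a (half_pos (hδ a ha))
  rcases t.eq_empty_or_nonempty with rfl | ht
  · exact ⟨1, one_pos, fun a ha => by simpa using hCt ha⟩
  refine ⟨t.inf' ht (fun a => δ a / 2),
    (Finset.lt_inf'_iff ht).2 fun a ha => half_pos (hδ a (htC a ha)), fun c hc hbdd => ?_⟩
  obtain ⟨a, hat, hca⟩ := Set.mem_iUnion₂.1 (hCt hc)
  refine hδorb a (htC a hat) ((hbdd.orbit_add_dist (a := a)).mono ?_)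
  have hle := t.inf'_le (fun a => δ a / 2) hat
  rw [mem_ball, dist_comm] at hca
  linarith

theorem exists_eBounded_orbit_of_forall_exists_dist_smul_lt {A : Finset X} {T : Finset G}
    {ρ : ℝ} (hcover : ∀ g : G, ∃ a ∈ A, ∃ h ∈ T, dist (g • a) (h • a) < ρ) :
    ∃ a ∈ A, EBounded (orbit G a) (2 * ρ) := by
  classical
  induction A using Finset.induction_on generalizing T with
  | empty =>
    obtain ⟨a, ha, -⟩ := hcover 1
    exact absurd ha (Finset.notMem_empty a)
  | insert a A _ ih =>
    by_cases hbdd : EBounded (orbit G a) (2 * ρ)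
    · exact ⟨a, Finset.mem_insert_self a A, hbdd⟩
    obtain ⟨g₀, hg₀⟩ : ∃ g₀ : G, ∀ h ∈ T, 2 * ρ ≤ dist (g₀ • a) (h • a) := by
      by_contra! hnear
      refine hbdd ⟨T.image (· • a), ?_⟩
      rintro _ ⟨g, rfl⟩
      obtain ⟨h, hT, hgh⟩ := hnear g
      exact Set.mem_iUnion₂.2 ⟨h • a, Finset.mem_image_of_mem _ hT, hgh⟩
    -- If `g • a` is `ρ`-close to `p • a`, then `(g₀ * p⁻¹ * g) • a` is `ρ`-close to `g₀ • a`,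
    -- so `g₀ * p⁻¹ * g` is covered at some other point `b`; moving back by `p * g₀⁻¹` covers `g`.
    obtain ⟨b, hb, hbdd⟩ := ih (T := T ∪ T * {g₀⁻¹} * T) fun g => by
      obtain ⟨c, hc, p, hp, hgp⟩ := hcover g
      rcases Finset.mem_insert.1 hc with hca | hc
      · subst c
        obtain ⟨b, hb, q, hq, hbq⟩ := hcover (g₀ * p⁻¹ * g)
        have hmove : ∀ x : X,
            dist (g • x) ((p * g₀⁻¹ * q) • x) = dist ((g₀ * p⁻¹ * g) • x) (q • x) := fun x => by
          rw [← dist_smul (g₀ * p⁻¹), smul_smul, smul_smul]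
          congr 2
          group
        rcases Finset.mem_insert.1 hb with hba | hb
        · subst b
          have hpg := dist_smul (g₀ * p⁻¹) (p • a) (g • a)
          rw [smul_smul, smul_smul, inv_mul_cancel_right] at hpg
          linarith [hg₀ q hq, dist_triangle (g₀ • a) ((g₀ * p⁻¹ * g) • a) (q • a),
            dist_comm (p • a) (g • a)]
        · exact ⟨b, hb, p * g₀⁻¹ * q, Finset.mem_union_right _ <|
            Finset.mul_mem_mul (Finset.mul_mem_mul hp (Finset.mem_singleton_self _)) hq,
            (hmove b).trans_lt hbq⟩
      · exact ⟨c, hc, p, Finset.mem_union_left _ hp, hgp⟩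
    exact ⟨b, Finset.mem_insert_of_mem hb, hbdd⟩

end

/-- Lemma 3.2: if `G` acts on `X` by isometries and `C ⊆ X` is compact with no point
of `C` having a totally bounded orbit, then there is `ε > 0` such that every
`ε`-bounded set `D` can be uniformly separated from some translate of `C`. -/
theorem metric_pm_neumann_compact {X G : Type*} [MetricSpace X] [Group G] [MulAction G X]
    (hiso : ∀ (g : G) (x y : X), dist (g • x) (g • y) = dist x y)
    (C : Set X) (hC : IsCompact C)
    (horb : ∀ a ∈ C, ¬ TotallyBounded (MulAction.orbit G a)) :
    ∃ ε > (0 : ℝ), ∀ D : Set X, EBounded D ε →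
      ∃ g : G, ∀ c ∈ C, ∀ d ∈ D, ε ≤ dist (g • c) d := by
  have : IsIsometricSMul G X := ⟨fun g => Isometry.of_dist_eq (hiso g)⟩
  obtain ⟨δ, hδ, hCorb⟩ := hC.exists_forall_not_eBounded_orbit horb
  refine ⟨δ / 16, by positivity, fun D ⟨F, hF⟩ => ?_⟩
  by_contra! hnear
  obtain ⟨A, hAC, hCA⟩ := hC.elim_nhds_subcover (fun a => ball a (δ / 8))
    fun a _ => ball_mem_nhds a (by positivity)
  have hcover : ∀ g : G, ∃ a ∈ A, ∃ x ∈ F, dist (g • a) x < δ / 4 := by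
    intro g
    obtain ⟨c, hc, d, hd, hcd⟩ := hnear g
    obtain ⟨a, haA, hca⟩ := Set.mem_iUnion₂.1 (hCA hc)
    obtain ⟨x, hxF, hdx⟩ := Set.mem_iUnion₂.1 (hF hd)
    refine ⟨a, haA, x, hxF, ?_⟩
    rw [mem_ball] at hca hdx
    calc dist (g • a) x ≤ dist (g • a) (g • c) + dist (g • c) d + dist d x := dist_triangle4 ..
      _ < δ / 8 + δ / 16 + δ / 16 := by
        rw [dist_smul, dist_comm]; gcongr
      _ = δ / 4 := by ring
  obtain ⟨T, hT⟩ := exists_finset_forall_exists_dist_smul_lt hcover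
  obtain ⟨a, haA, ha⟩ := exists_eBounded_orbit_of_forall_exists_dist_smul_lt hT
  exact hCorb a (hAC a haA) (ha.mono (by linarith))
end

section
/- Let X be a metric space, G a group of isometries of X, and C ⊆ X a compact set. If for each a ∈ C there is δ_a > 0 such that G·a is not δ_a-bounded, and A ⊆ C is a finite set with C ⊆ ⋃_{a∈A} B_{δ_a/2}(a), then setting ε = (1/18)·min_{a∈A} δ_a, no point of C has a 9ε-bounded orbit. -/
theorem EBounded.mono_radius {X : Type*} [MetricSpace X] {S : Set X} {ε ε' : ℝ}
    (hS : EBounded S ε) (hε : ε ≤ ε') : EBounded S ε' := by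
  obtain ⟨F, hF⟩ := hS
  exact ⟨F, hF.trans (Set.iUnion₂_mono fun y _ => Metric.ball_subset_ball hε)⟩

theorem EBounded.orbit_of_dist_lt {X G : Type*} [MetricSpace X] [Group G] [MulAction G X]
    (hiso : ∀ (g : G) (x y : X), dist (g • x) (g • y) = dist x y) {x a : X} {r ε : ℝ}
    (hx : EBounded (MulAction.orbit G x) ε) (hxa : dist a x < r) :
    EBounded (MulAction.orbit G a) (r + ε) := by
  obtain ⟨F, hF⟩ := hx
  refine ⟨F, ?_⟩
  rintro _ ⟨g, rfl⟩
  obtain ⟨y, hyF, hy⟩ := Set.mem_iUnion₂.mp (hF ⟨g, rfl⟩)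
  refine Set.mem_iUnion₂.mpr ⟨y, hyF, ?_⟩
  rw [Metric.mem_ball] at hy ⊢
  calc dist (g • a) y ≤ dist (g • a) (g • x) + dist (g • x) y := dist_triangle _ _ _
    _ < r + ε := by rw [hiso]; gcongr

theorem uniform_orbit_unboundedness_general {X G : Type*} [MetricSpace X] [Group G] [MulAction G X]
    (hiso : ∀ (g : G) (x y : X), dist (g • x) (g • y) = dist x y)
    (C : Set X) (δ : X → ℝ)
    (hδ : ∀ a ∈ C, 0 < δ a ∧ ¬ EBounded (MulAction.orbit G a) (δ a))
    (A : Finset X) (hAne : A.Nonempty) (hAC : (A : Set X) ⊆ C)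
    (hcov : C ⊆ ⋃ a ∈ A, Metric.ball a (δ a / 2)) :
    ∀ x ∈ C, ¬ EBounded (MulAction.orbit G x) (9 * ((1 / 18) * A.inf' hAne δ)) := by
  intro x hx hbounded
  obtain ⟨a, haA, hxa⟩ := Set.mem_iUnion₂.mp (hcov hx)
  have hmin : A.inf' hAne δ ≤ δ a := Finset.inf'_le _ haA
  have hax : dist a x < δ a / 2 := by rwa [Metric.mem_ball, dist_comm] at hxa
  exact (hδ a (hAC haA)).2 <| (hbounded.orbit_of_dist_lt hiso hax).mono_radius (by linarith)

/-- Uniformity step in the proof of Lemma 3.2: from a finite subcover of `C` by balls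
`B_{δ a / 2}(a)` with `G•a` not `δ a`-bounded, setting `ε = (1/18) min_{a ∈ A} δ a`,
no point of `C` has a `9ε`-bounded orbit. -/
theorem uniform_orbit_unboundedness {X G : Type*} [MetricSpace X] [Group G] [MulAction G X]
    (hiso : ∀ (g : G) (x y : X), dist (g • x) (g • y) = dist x y)
    (C : Set X) (hC : IsCompact C) (δ : X → ℝ)
    (hδ : ∀ a ∈ C, 0 < δ a ∧ ¬ EBounded (MulAction.orbit G a) (δ a))
    (A : Finset X) (hAne : A.Nonempty) (hAC : (A : Set X) ⊆ C)
    (hcov : C ⊆ ⋃ a ∈ A, Metric.ball a (δ a / 2)) :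
    ∀ x ∈ C, ¬ EBounded (MulAction.orbit G x) (9 * ((1 / 18) * A.inf' hAne δ)) :=
  uniform_orbit_unboundedness_general hiso C δ hδ A hAne hAC hcov
end

section
/- Let G be a group acting on a set X, and let P, Q ⊆ X be finite sets such that every point of P has an infinite orbit. Then there exists an infinite sequence g₀, g₁, g₂, ... in G such that the sets gᵢ·P, for i < ω, are pairwise disjoint. -/
open Pointwise MulAction

/-- P. M. Neumann's Lemma. -/
lemma neumann_lemma {X G : Type*} [Group G] [MulAction G X] (P Q : Finset X)
    (hP : ∀ p ∈ P, (MulAction.orbit G p).Infinite) :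
    ∃ g : G, Disjoint (g • (P : Set X)) (Q : Set X) := by
  classical
  by_contra hcon
  push_neg at hcon
  have key : ∀ g : G, ∃ p ∈ P, ∃ q ∈ Q, g • p = q := by
    intro g
    obtain ⟨x, hx1, hx2⟩ := Set.not_disjoint_iff.mp (hcon g)
    obtain ⟨p, hp, rfl⟩ := hx1
    exact ⟨p, hp, _, hx2, rfl⟩
  -- build a coset cover
  set g0 : X × X → G := fun k =>
    if h : ∃ h : G, h • k.1 = k.2 then h.choose else 1 with hg0
  have hcovers : ⋃ k ∈ P ×ˢ Q, g0 k • ((MulAction.stabilizer G k.1 : Subgroup G) : Set G)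
      = Set.univ := by
    apply Set.eq_univ_of_forall
    intro g
    obtain ⟨p, hp, q, hq, hpq⟩ := key g
    have hex : ∃ h : G, h • p = q := ⟨g, hpq⟩
    refine Set.mem_biUnion (Finset.mk_mem_product hp hq) ?_
    rw [Set.mem_smul_set_iff_inv_smul_mem]
    have h0 : g0 (p, q) • p = q := by
      simp only [hg0, dif_pos hex]
      exact hex.choose_spec
    have : ((g0 (p, q))⁻¹ * g) • p = p := by
      rw [mul_smul, hpq, inv_smul_eq_iff]
      exact h0.symm
    simpa [SetLike.mem_coe, MulAction.mem_stabilizer_iff] using this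
  obtain ⟨k, hk, hfi⟩ := Subgroup.exists_finiteIndex_of_leftCoset_cover hcovers
  obtain ⟨hk1, hk2⟩ := Finset.mem_product.mp hk
  have : Finite (G ⧸ MulAction.stabilizer G k.1) := by
    haveI := hfi
    exact Subgroup.finite_quotient_of_finiteIndex
  have : (MulAction.orbit G k.1).Finite := by
    rw [← Set.finite_coe_iff]
    exact Finite.of_equiv _ (MulAction.orbitEquivQuotientStabilizer G k.1).symm
  exact hP k.1 hk1 this

/-- Iterated P. M. Neumann Lemma: if every point of the finite set `P` has an infinite
orbit, then there is an infinite sequence of group elements whose translates of `P`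
are pairwise disjoint. -/
theorem pairwise_disjoint_translates {X G : Type*} [Group G] [MulAction G X]
    (P Q : Finset X) (hP : ∀ p ∈ P, (MulAction.orbit G p).Infinite) :
    ∃ g : ℕ → G, ∀ i j : ℕ, i ≠ j →
      Disjoint ((fun x => g i • x) '' (P : Set X)) ((fun x => g j • x) '' (P : Set X)) := by
  classical
  -- step: given a finite set Q', pick g with g • P disjoint from Q'
  choose step hstep using fun Q' : Finset X => neumann_lemma P Q' hP
  -- accumulate
  let acc : ℕ → G × Finset X := fun n => Nat.rec
    (let g := step ∅; (g, g • P))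
    (fun _ prev => let g := step prev.2; (g, prev.2 ∪ g • P)) n
  set g : ℕ → G := fun n => (acc n).1 with hg
  have hsub : ∀ n, (g n • P : Finset X) ⊆ (acc n).2 := by
    intro n
    cases n with
    | zero => exact Finset.Subset.refl _
    | succ m => exact Finset.subset_union_right
  have hmono : ∀ m n, m ≤ n → (acc m).2 ⊆ (acc n).2 := by
    intro m n hmn
    induction n with
    | zero => simpa [Nat.le_zero.mp hmn]
    | succ k ih =>
      rcases Nat.lt_or_ge m (k+1) with h | h
      · exact (ih (Nat.lt_succ_iff.mp h)).trans Finset.subset_union_left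
      · have : m = k + 1 := le_antisymm hmn h
        subst this; exact Finset.Subset.refl _
  have hdisj : ∀ n, Disjoint (g (n+1) • (P : Set X)) ((acc n).2 : Set X) :=
    fun n => hstep (acc n).2
  have main : ∀ i j, i < j →
      Disjoint (g j • (P : Set X)) (g i • (P : Set X)) := by
    intro i j hij
    obtain ⟨k, rfl⟩ := Nat.exists_eq_add_of_lt hij
    refine (hdisj (i + k)).mono_right ?_
    calc g i • (P : Set X) = ((g i • P : Finset X) : Set X) := by
          simp [Finset.coe_smul_finset]
      _ ⊆ ((acc (i + k)).2 : Set X) := by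
          exact_mod_cast (hsub i).trans (hmono i (i + k) (Nat.le_add_right i k))
  refine ⟨g, fun i j hij => ?_⟩
  have himg : ∀ n, (fun x => g n • x) '' (P : Set X) = g n • (P : Set X) := fun n => rfl
  rw [himg, himg]
  rcases hij.lt_or_gt with h | h
  · exact (main i j h).symm
  · exact main j i h
end

section
/- Let X be a metric space and G a group of isometries of X. Let C ⊆ X be compact with no point of C having a totally bounded orbit. Then there exist ε > 0 and a sequence (gₙ)_{n<ω} in G such that d(gᵢ·C, gⱼ·C) ≥ ε for all i < j < ω. -/
open Metric MulAction Set

section SepAux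

variable {X G : Type*} [MetricSpace X] [Group G] [MulAction G X]

/-- No finite set is an `r`-net for the orbit of `a`. -/
def NoNet (G : Type*) [Group G] [MulAction G X] (a : X) (r : ℝ) : Prop :=
  ∀ F : Finset X, ∃ g : G, ∀ p ∈ F, r ≤ dist (g • a) p

lemma nonet_of_not_totallyBounded {a : X}
    (h : ¬ TotallyBounded (orbit G a)) : ∃ r > (0:ℝ), NoNet G a r := by
  rw [Metric.totallyBounded_iff] at h
  push_neg at h
  obtain ⟨ε, hε, hF⟩ := h
  refine ⟨ε, hε, fun F => ?_⟩
  obtain ⟨z, hz, hzF⟩ : ∃ z ∈ orbit G a, z ∉ ⋃ y ∈ (F : Set X), ball y ε := by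
    by_contra hc
    push_neg at hc
    exact hF F F.finite_toSet hc
  obtain ⟨g, rfl⟩ := hz
  refine ⟨g, fun p hp => ?_⟩
  by_contra hlt
  push_neg at hlt
  exact hzF (mem_iUnion₂.mpr ⟨p, hp, mem_ball.mpr (by rwa [dist_comm] at hlt ⊢)⟩)

lemma nonet_mono {a : X} {r r' : ℝ} (h : r' ≤ r) (hn : NoNet G a r) : NoNet G a r' := by
  intro F
  obtain ⟨g, hg⟩ := hn F
  exact ⟨g, fun p hp => le_trans h (hg p hp)⟩

lemma nonet_transfer (hiso : ∀ (g : G) (x y : X), dist (g • x) (g • y) = dist x y)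
    {a b : X} {r d : ℝ} (hn : NoNet G a r) (hd : dist a b ≤ d) : NoNet G b (r - d) := by
  intro F
  obtain ⟨g, hg⟩ := hn F
  refine ⟨g, fun p hp => ?_⟩
  have h1 := hg p hp
  have h2 : dist (g • a) (g • b) = dist a b := hiso g a b
  have h3 := dist_triangle (g • a) (g • b) p
  linarith

lemma nonet_smul {x : X} {r : ℝ} (h : NoNet G x r) (g₀ : G) : NoNet G (g₀ • x) r := by
  intro F
  obtain ⟨g, hg⟩ := h F
  refine ⟨g * g₀⁻¹, fun p hp => ?_⟩
  rw [smul_smul, inv_mul_cancel_right]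
  exact hg p hp

lemma uniform_eta {C : Set X}
    (hiso : ∀ (g : G) (x y : X), dist (g • x) (g • y) = dist x y)
    (hC : IsCompact C)
    (horb : ∀ a ∈ C, ¬ TotallyBounded (orbit G a)) (hne : C.Nonempty) :
    ∃ η > (0:ℝ), ∀ x ∈ C, NoNet G x η := by
  classical
  have h1 : ∀ a : C, ∃ r > (0:ℝ), NoNet G (a : X) r :=
    fun a => nonet_of_not_totallyBounded (horb a a.2)
  choose r hr hnet using h1
  have hcov : C ⊆ ⋃ a : C, ball (a : X) (r a / 3) := by
    intro x hx
    exact mem_iUnion.mpr ⟨⟨x, hx⟩, mem_ball.mpr (by simp only [dist_self]; have := hr ⟨x, hx⟩; linarith)⟩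
  obtain ⟨t, ht⟩ := hC.elim_finite_subcover (fun a : C => ball (a : X) (r a / 3))
    (fun a => isOpen_ball) hcov
  have htne : t.Nonempty := by
    obtain ⟨x, hx⟩ := hne
    obtain ⟨a, hat, _⟩ := mem_iUnion₂.mp (ht hx)
    exact ⟨a, hat⟩
  refine ⟨t.inf' htne (fun a => r a / 3), (Finset.lt_inf'_iff htne).mpr (fun a _ => by have := hr a; linarith), ?_⟩
  intro x hx
  obtain ⟨a, hat, hxa⟩ := mem_iUnion₂.mp (ht hx)
  have hxa' : dist (a : X) x ≤ r a / 3 := by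
    rw [dist_comm]
    exact le_of_lt (mem_ball.mp hxa)
  have h2 : NoNet G x (r a - r a / 3) := nonet_transfer hiso (hnet a) hxa'
  refine nonet_mono ?_ h2
  have h3 : t.inf' htne (fun a => r a / 3) ≤ r a / 3 := Finset.inf'_le _ hat
  have h4 := hr a
  linarith

lemma exists_sep_seq {a : X} {η : ℝ} (h : NoNet G a η) :
    ∃ v : ℕ → G, ∀ t s, t ≠ s → η ≤ dist (v t • a) (v s • a) := by
  classical
  choose e he using h
  let Fa : ℕ → Finset X := fun n => Nat.rec ∅ (fun _ Fp => insert (e Fp • a) Fp) n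
  have hFa_succ : ∀ n, Fa (n + 1) = insert (e (Fa n) • a) (Fa n) := fun n => rfl
  let v : ℕ → G := fun n => e (Fa n)
  have hmem : ∀ t s, t < s → v t • a ∈ Fa s := by
    intro t s hts
    induction s with
    | zero => omega
    | succ m ihm =>
      rw [hFa_succ]
      rcases Nat.lt_succ_iff_lt_or_eq.mp hts with h' | h'
      · exact Finset.mem_insert_of_mem (ihm h')
      · subst h'
        exact Finset.mem_insert_self _ _
  refine ⟨v, fun t s hts => ?_⟩
  rcases lt_or_gt_of_ne hts with h' | h'
  · rw [dist_comm]
    exact he (Fa s) _ (hmem t s h')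
  · exact he (Fa t) _ (hmem s t h')

end SepAux

section Dich
variable {X : Type*} [MetricSpace X]

/-- From any sequence of points, extract a monotone subsequence whose values either all
lie within `2κ` of each other, or are pairwise `κ`-separated. -/
lemma dichotomy (y : ℕ → X) (κ : ℝ) :
    ∃ φ : ℕ → ℕ, StrictMono φ ∧
      ((∀ t s, dist (y (φ t)) (y (φ s)) ≤ 2 * κ) ∨
       (∀ t s, t ≠ s → κ ≤ dist (y (φ t)) (y (φ s)))) := by
  classical
  by_cases h : ∃ s, {t | dist (y t) (y s) ≤ κ}.Infinite
  · obtain ⟨s₀, hs₀⟩ := h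
    set S := {t | dist (y t) (y s₀) ≤ κ} with hS
    -- monotone enumeration of the infinite set S
    have hstep : ∀ ℓ : ℕ, ∃ m, m ∈ S ∧ ℓ < m := by
      intro ℓ
      obtain ⟨b, hb, hlb⟩ := hs₀.exists_gt ℓ
      exact ⟨b, hb, hlb⟩
    obtain ⟨m₀, hm₀⟩ := hs₀.nonempty
    let φ : ℕ → ℕ := fun n => Nat.rec m₀ (fun _ prev => (hstep prev).choose) n
    have hφ_succ : ∀ n, φ (n + 1) = (hstep (φ n)).choose := fun n => rfl
    have hφ_mem : ∀ n, φ n ∈ S := by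
      intro n
      cases n with
      | zero => exact hm₀
      | succ m => rw [hφ_succ]; exact (hstep (φ m)).choose_spec.1
    have hφ_mono : StrictMono φ := by
      apply strictMono_nat_of_lt_succ
      intro n
      rw [hφ_succ]
      exact (hstep (φ n)).choose_spec.2
    refine ⟨φ, hφ_mono, Or.inl (fun t s => ?_)⟩
    have h1 : dist (y (φ t)) (y s₀) ≤ κ := hφ_mem t
    have h2 : dist (y (φ s)) (y s₀) ≤ κ := hφ_mem s
    have h3 := dist_triangle (y (φ t)) (y s₀) (y (φ s))
    rw [dist_comm (y s₀)] at h3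
    linarith
  · push_neg at h
    -- every "κ-ball set" is finite; greedily construct a κ-separated subsequence
    have key : ∀ ℓ : ℕ, ∃ m, ℓ < m ∧ ∀ i ≤ ℓ, κ < dist (y m) (y i) := by
      intro ℓ
      by_contra hc
      push_neg at hc
      have hsub : Set.Ioi ℓ ⊆ ⋃ i ∈ Finset.range (ℓ + 1), {t | dist (y t) (y i) ≤ κ} := by
        intro m hm
        obtain ⟨i, hi, hdi⟩ := hc m hm
        exact mem_iUnion₂.mpr ⟨i, Finset.mem_range.mpr (by omega), hdi⟩
      have hfin : (⋃ i ∈ Finset.range (ℓ + 1), {t | dist (y t) (y i) ≤ κ}).Finite :=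
        Set.Finite.biUnion (Finset.range (ℓ + 1)).finite_toSet (fun i _ => h i)
      exact (Set.Ioi_infinite ℓ) (hfin.subset hsub)
    let φ : ℕ → ℕ := fun n => Nat.rec 0 (fun _ prev => (key prev).choose) n
    have hφ_succ : ∀ n, φ (n + 1) = (key (φ n)).choose := fun n => rfl
    have hφ_mono : StrictMono φ := by
      apply strictMono_nat_of_lt_succ
      intro n
      rw [hφ_succ]
      exact (key (φ n)).choose_spec.1
    refine ⟨φ, hφ_mono, Or.inr ?_⟩
    have hlt : ∀ t s, t < s → κ ≤ dist (y (φ s)) (y (φ t)) := by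
      intro t s hts
      cases s with
      | zero => omega
      | succ m =>
        have hsm : φ t ≤ φ m := by
          rcases Nat.lt_succ_iff_lt_or_eq.mp hts with h' | h'
          · exact le_of_lt (hφ_mono h')
          · subst h'; exact le_refl _
        rw [hφ_succ]
        exact le_of_lt ((key (φ m)).choose_spec.2 (φ t) hsm)
    intro t s hts
    rcases lt_or_gt_of_ne hts with h' | h'
    · rw [dist_comm]; exact hlt t s h'
    · exact hlt s t h'

end Dich

section Refine
variable {X G : Type*} [MetricSpace X] [Group G] [MulAction G X]

/-- Refine a sequence of group elements over a finite list of test points so that at each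
test point the images either cluster (within `2κ`) or are pairwise `κ`-separated. -/
lemma refineList (v : ℕ → G) (κ : ℝ) (L : List X) :
    ∃ φ : ℕ → ℕ, StrictMono φ ∧ ∀ q ∈ L,
      ((∀ t s, dist (v (φ t) • q) (v (φ s) • q) ≤ 2 * κ) ∨
       (∀ t s, t ≠ s → κ ≤ dist (v (φ t) • q) (v (φ s) • q))) := by
  induction L with
  | nil => exact ⟨id, strictMono_id, by simp⟩
  | cons q L ih =>
    obtain ⟨φ₁, hφ₁, hL⟩ := ih
    obtain ⟨φ₂, hφ₂, hq⟩ := dichotomy (fun t => v (φ₁ t) • q) κ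
    refine ⟨φ₁ ∘ φ₂, hφ₁.comp hφ₂, ?_⟩
    intro q' hq'
    rcases List.mem_cons.mp hq' with h | h
    · subst h
      rcases hq with h1 | h1
      · exact Or.inl (fun t s => h1 t s)
      · exact Or.inr (fun t s hts => h1 t s hts)
    · rcases hL q' h with h1 | h1
      · exact Or.inl (fun t s => h1 (φ₂ t) (φ₂ s))
      · exact Or.inr (fun t s hts => h1 (φ₂ t) (φ₂ s) (fun e => hts (hφ₂.injective e)))

end Refine

section Eps

noncomputable def eps (η : ℝ) (n : ℕ) : ℝ := 3 * η / 20 ^ (n + 1)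

lemma eps_pos {η : ℝ} (hη : 0 < η) (n : ℕ) : 0 < eps η n := by
  unfold eps; positivity

lemma eps_succ (η : ℝ) (n : ℕ) : eps η (n + 1) = eps η n / 20 := by
  unfold eps
  rw [pow_succ]
  ring

lemma eps_le {η : ℝ} (hη : 0 < η) (n : ℕ) : eps η n ≤ 3 * η / 20 := by
  unfold eps
  have h1 : (20:ℝ) ≤ 20 ^ (n + 1) := le_self_pow₀ (by norm_num) (Nat.succ_ne_zero n)
  exact div_le_div_of_nonneg_left (by linarith) (by norm_num) h1

end Eps

section CEL
variable {X G : Type*} [MetricSpace X] [Group G] [MulAction G X]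

/-- Compact escape lemma: if `D` is covered by `n` balls of radius `η/8` and every point of
`D` has an orbit with no finite `η`-net, then for every finite `P ⊆ X` some translate of `D`
stays `eps η n`-far from `P`. -/
lemma CEL (hiso : ∀ (g : G) (x y : X), dist (g • x) (g • y) = dist x y)
    {η : ℝ} (hη : 0 < η) :
    ∀ (n : ℕ) (D : Set X), IsCompact D →
      (∃ T : Finset X, T.card ≤ n ∧ D ⊆ ⋃ z ∈ T, ball z (η / 8)) →
      (∀ z ∈ D, NoNet G z η) →
      ∀ P : Finset X, ∃ g : G, ∀ x ∈ D, ∀ p ∈ P, eps η n ≤ dist (g • x) p := by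
  intro n
  induction n with
  | zero =>
    rintro D _ ⟨T, hT0, hcov⟩ _ P
    have hTe : T = ∅ := Finset.card_eq_zero.mp (le_antisymm hT0 (Nat.zero_le _))
    subst hTe
    refine ⟨1, fun x hx => ?_⟩
    simp only [Finset.notMem_empty, iUnion_of_empty, iUnion_empty] at hcov
    exact absurd (hcov hx) (notMem_empty x)
  | succ n IH =>
    rintro D hDc ⟨T, hTcard, hTcov⟩ hDnet P
    classical
    rcases D.eq_empty_or_nonempty with rfl | ⟨a, ha⟩
    · exact ⟨1, fun x hx => absurd hx (notMem_empty x)⟩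
    set E := eps η n with hE
    have hEpos : 0 < E := eps_pos hη n
    have hsucc : eps η (n + 1) = E / 20 := eps_succ η n
    have heps_smalls : eps η (n+1) ≤ 3 * η / 20 := eps_le hη (n+1)
    set κ := E / 4 with hκ
    set τ := E / 400 with hτ
    have hτpos : 0 < τ := by rw [hτ]; linarith
    -- initial η-separated family at a
    obtain ⟨v, hv⟩ := exists_sep_seq (hDnet a ha)
    -- finite τ-net of D
    obtain ⟨Qs, hQfin, hQcov⟩ := (Metric.totallyBounded_iff.mp hDc.totallyBounded) τ hτpos
    set Q : Finset X := hQfin.toFinset with hQdef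
    -- refine the family over the net
    obtain ⟨φ, hφ, hdich⟩ := refineList v κ Q.toList
    set u : ℕ → G := fun t => v (φ t) with hu
    have hu_sep : ∀ t s, t ≠ s → η ≤ dist (u t • a) (u s • a) :=
      fun t s hts => hv _ _ (fun e => hts (hφ.injective e))
    -- separated part of the net
    set QR : Finset X := Q.filter
      (fun q => ∀ t s, t ≠ s → κ ≤ dist (u t • q) (u s • q)) with hQR
    have hQR_sep : ∀ q ∈ QR, ∀ t s, t ≠ s → κ ≤ dist (u t • q) (u s • q) :=
      fun q hq => (Finset.mem_filter.mp hq).2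
    have hclus : ∀ q ∈ Q, q ∉ QR → ∀ t s, dist (u t • q) (u s • q) ≤ 2 * κ := by
      intro q hq hqR
      rcases hdich q (Finset.mem_toList.mpr hq) with h | h
      · exact h
      · exact absurd (Finset.mem_filter.mpr ⟨hq, h⟩) hqR
    -- the cluster part of D
    set DS : Set X := D ∩ {x | η / 4 ≤ dist x a ∧ ∀ q ∈ QR, 2 * τ ≤ dist x q} with hDS
    have hDSc : IsCompact DS := by
      apply hDc.inter_right
      have hc1 : IsClosed {x : X | η / 4 ≤ dist x a} :=
        isClosed_le continuous_const (continuous_id.dist continuous_const)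
      have hc2 : IsClosed {x : X | ∀ q ∈ QR, 2 * τ ≤ dist x q} := by
        have e : {x : X | ∀ q ∈ QR, 2 * τ ≤ dist x q}
            = ⋂ q ∈ QR, {x : X | 2 * τ ≤ dist x q} := by
          ext x; simp
        rw [e]
        exact isClosed_biInter
          (fun q _ => isClosed_le continuous_const (continuous_id.dist continuous_const))
      exact hc1.inter hc2
    -- reduced cover for DS
    obtain ⟨z₀, hz₀T, hz₀⟩ := mem_iUnion₂.mp (hTcov ha)
    have hz₀' : dist a z₀ < η / 8 := mem_ball.mp hz₀
    have hDScov : DS ⊆ ⋃ z ∈ T.erase z₀, ball z (η / 8) := by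
      rintro x ⟨hxD, hxa, _⟩
      obtain ⟨z, hzT, hz⟩ := mem_iUnion₂.mp (hTcov hxD)
      refine mem_iUnion₂.mpr ⟨z, Finset.mem_erase.mpr ⟨?_, hzT⟩, hz⟩
      rintro rfl
      have h1 : dist x z < η / 8 := mem_ball.mp hz
      have h2 := dist_triangle x z a
      rw [dist_comm z a] at h2
      linarith
    have hT'card : (T.erase z₀).card ≤ n := by
      rw [Finset.card_erase_of_mem hz₀T]
      omega
    -- translate DS by u 0
    have hisou0 : Isometry (fun x : X => u 0 • x) :=
      Isometry.of_dist_eq (fun x y => hiso (u 0) x y)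
    set DS' : Set X := (fun x : X => u 0 • x) '' DS with hDS'
    have hDS'c : IsCompact DS' := hDSc.image hisou0.continuous
    have hDS'cov : DS' ⊆ ⋃ z ∈ (T.erase z₀).image (fun z => u 0 • z), ball z (η / 8) := by
      rintro y ⟨x, hx, rfl⟩
      obtain ⟨z, hzT, hz⟩ := mem_iUnion₂.mp (hDScov hx)
      refine mem_iUnion₂.mpr ⟨u 0 • z, Finset.mem_image_of_mem _ hzT, ?_⟩
      rw [mem_ball] at hz ⊢
      rwa [hiso]
    have hDS'card : ((T.erase z₀).image (fun z => u 0 • z)).card ≤ n :=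
      le_trans (Finset.card_image_le) hT'card
    have hDS'net : ∀ z ∈ DS', NoNet G z η := by
      rintro z ⟨x, hx, rfl⟩
      exact nonet_smul (hDnet x hx.1) (u 0)
    -- inductive escape for the translated cluster part
    obtain ⟨w, hw⟩ := IH DS' hDS'c ⟨_, hDS'card, hDS'cov⟩ hDS'net P
    -- bad indices
    have habad : ∀ p ∈ P,
        Set.Subsingleton {t : ℕ | dist ((w * u t) • a) p < eps η (n+1) + η / 4} := by
      intro p hp t ht s hs
      by_contra hts
      have h1 := hu_sep t s hts
      have h2 : dist ((w * u t) • a) ((w * u s) • a) = dist (u t • a) (u s • a) := by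
        rw [mul_smul, mul_smul, hiso]
      have h3 := dist_triangle ((w * u t) • a) p ((w * u s) • a)
      rw [dist_comm p ((w * u s) • a)] at h3
      simp only [Set.mem_setOf_eq] at ht hs
      linarith
    have hRbad : ∀ q ∈ QR, ∀ p ∈ P,
        Set.Subsingleton {t : ℕ | dist ((w * u t) • q) p < eps η (n+1) + 2 * τ} := by
      intro q hq p hp t ht s hs
      by_contra hts
      have h1 := hQR_sep q hq t s hts
      have h2 : dist ((w * u t) • q) ((w * u s) • q) = dist (u t • q) (u s • q) := by
        rw [mul_smul, mul_smul, hiso]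
      have h3 := dist_triangle ((w * u t) • q) p ((w * u s) • q)
      rw [dist_comm p ((w * u s) • q)] at h3
      simp only [Set.mem_setOf_eq] at ht hs
      rw [hsucc] at ht hs
      rw [hκ] at h1
      rw [hτ] at ht hs
      linarith
    set Bad : Set ℕ :=
      (⋃ p ∈ P, {t : ℕ | dist ((w * u t) • a) p < eps η (n+1) + η / 4}) ∪
      (⋃ q ∈ QR, ⋃ p ∈ P, {t : ℕ | dist ((w * u t) • q) p < eps η (n+1) + 2 * τ}) with hBad
    have hBadFin : Bad.Finite := by
      apply Set.Finite.union
      · exact Set.Finite.biUnion P.finite_toSet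
          (fun p hp => Set.Subsingleton.finite (habad p hp))
      · exact Set.Finite.biUnion QR.finite_toSet (fun q hq =>
          Set.Finite.biUnion P.finite_toSet
            (fun p hp => Set.Subsingleton.finite (hRbad q hq p hp)))
    obtain ⟨t₀, ht₀⟩ := hBadFin.infinite_compl.nonempty
    have ht₀a : ∀ p ∈ P, eps η (n+1) + η / 4 ≤ dist ((w * u t₀) • a) p := by
      intro p hp
      by_contra hlt
      push_neg at hlt
      exact ht₀ (Set.mem_union_left _ (mem_iUnion₂.mpr ⟨p, hp, hlt⟩))
    have ht₀R : ∀ q ∈ QR, ∀ p ∈ P, eps η (n+1) + 2 * τ ≤ dist ((w * u t₀) • q) p := by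
      intro q hq p hp
      by_contra hlt
      push_neg at hlt
      exact ht₀ (Set.mem_union_right _ (mem_iUnion₂.mpr ⟨q, hq, mem_iUnion₂.mpr ⟨p, hp, hlt⟩⟩))
    refine ⟨w * u t₀, fun x hx p hp => ?_⟩
    by_cases hx1 : dist x a ≤ η / 4
    · -- close to the designated separated point a
      have h1 := ht₀a p hp
      have h2 : dist ((w * u t₀) • a) ((w * u t₀) • x) = dist a x := by
        rw [mul_smul, mul_smul, hiso, hiso]
      have h3 := dist_triangle ((w * u t₀) • a) ((w * u t₀) • x) p
      rw [dist_comm x a] at hx1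
      linarith
    by_cases hx2 : ∃ q ∈ QR, dist x q ≤ 2 * τ
    · -- close to a separated net point
      obtain ⟨q, hqR, hxq⟩ := hx2
      have h1 := ht₀R q hqR p hp
      have h2 : dist ((w * u t₀) • q) ((w * u t₀) • x) = dist q x := by
        rw [mul_smul, mul_smul, hiso, hiso]
      have h3 := dist_triangle ((w * u t₀) • q) ((w * u t₀) • x) p
      rw [dist_comm x q] at hxq
      linarith
    -- the cluster part: x ∈ DS
    push_neg at hx1 hx2
    have hxDS : x ∈ DS := ⟨hx, le_of_lt hx1, fun q hq => le_of_lt (hx2 q hq)⟩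
    obtain ⟨qq, hqqs, hqq⟩ := mem_iUnion₂.mp (hQcov hx)
    have hqqQ : qq ∈ Q := hQfin.mem_toFinset.mpr hqqs
    have hxqq : dist x qq < τ := mem_ball.mp hqq
    have hqqR : qq ∉ QR := by
      intro hmem
      have := hx2 qq hmem
      linarith
    have hclqq : dist (u t₀ • qq) (u 0 • qq) ≤ 2 * κ := hclus qq hqqQ hqqR t₀ 0
    -- w-escape at u 0 • x
    have hx' : u 0 • x ∈ DS' := ⟨x, hxDS, rfl⟩
    have h1 : E ≤ dist (w • (u 0 • x)) p := hw _ hx' p hp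
    -- distance between candidate image and reference image
    have h2 : dist ((w * u t₀) • x) (w • (u 0 • x)) ≤ 2 * κ + 2 * τ := by
      have e1 : dist ((w * u t₀) • x) (w • (u 0 • x)) = dist (u t₀ • x) (u 0 • x) := by
        rw [mul_smul, hiso]
      have e2 := dist_triangle (u t₀ • x) (u t₀ • qq) (u 0 • x)
      have e3 := dist_triangle (u t₀ • qq) (u 0 • qq) (u 0 • x)
      have e4 : dist (u t₀ • x) (u t₀ • qq) = dist x qq := hiso _ _ _
      have e5 : dist (u 0 • qq) (u 0 • x) = dist qq x := hiso _ _ _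
      have e6 : dist qq x < τ := by rw [dist_comm]; exact hxqq
      rw [e1]
      linarith
    have h3 := dist_triangle (w • (u 0 • x)) ((w * u t₀) • x) p
    rw [dist_comm (w • (u 0 • x)) ((w * u t₀) • x)] at h3
    have hfin : E - (2 * κ + 2 * τ) ≤ dist ((w * u t₀) • x) p := by linarith
    rw [hsucc]
    rw [hκ, hτ] at hfin
    linarith
end CEL

/-- Iterated Lemma 3.2: for compact `C` with no point having a totally bounded orbit,
there are `ε > 0` and a sequence of group elements whose translates of `C` are pairwise
`ε`-separated. -/
theorem separated_translates_of_compact {X G : Type*} [MetricSpace X] [Group G] [MulAction G X]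
    (hiso : ∀ (g : G) (x y : X), dist (g • x) (g • y) = dist x y)
    (C : Set X) (hC : IsCompact C)
    (horb : ∀ a ∈ C, ¬ TotallyBounded (MulAction.orbit G a)) :
    ∃ ε > (0 : ℝ), ∃ g : ℕ → G, ∀ i j : ℕ, i < j →
      ∀ c ∈ C, ∀ c' ∈ C, ε ≤ dist (g i • c) (g j • c') := by
  classical
  rcases C.eq_empty_or_nonempty with rfl | hne
  · exact ⟨1, one_pos, fun _ => 1, fun i j _ c hc => absurd hc (notMem_empty c)⟩
  obtain ⟨η, hη, hCnet⟩ := uniform_eta hiso hC horb hne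
  -- cover of C by balls of radius η/8
  obtain ⟨Ts, hTfin, hTcov⟩ := (Metric.totallyBounded_iff.mp hC.totallyBounded) (η / 8)
    (by positivity)
  set T : Finset X := hTfin.toFinset with hTdef
  have hTcov' : C ⊆ ⋃ z ∈ T, ball z (η / 8) := by
    intro x hx
    obtain ⟨y, hy, hb⟩ := mem_iUnion₂.mp (hTcov hx)
    exact mem_iUnion₂.mpr ⟨y, hTfin.mem_toFinset.mpr hy, hb⟩
  set E := eps η T.card with hE
  have hEpos : 0 < E := eps_pos hη _
  -- uniform escape function
  have hesc : ∀ P : Finset X, ∃ g : G, ∀ x ∈ C, ∀ p ∈ P, E ≤ dist (g • x) p :=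
    fun P => CEL hiso hη T.card C hC ⟨T, le_refl _, hTcov'⟩ hCnet P
  choose e he using hesc
  -- finite (E/4)-net of C
  obtain ⟨Ns, hNfin, hNcov⟩ := (Metric.totallyBounded_iff.mp hC.totallyBounded) (E / 4)
    (by positivity)
  set Qn : Finset X := hNfin.toFinset with hQn
  -- recursively built forbidden sets
  let Fa : ℕ → Finset X := fun n =>
    Nat.rec ∅ (fun _ Fp => Fp ∪ Qn.image (fun q => e Fp • q)) n
  have hFa_succ : ∀ n, Fa (n + 1) = Fa n ∪ Qn.image (fun q => e (Fa n) • q) := fun n => rfl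
  set g : ℕ → G := fun n => e (Fa n) with hg
  have hFmono : ∀ i j, i ≤ j → Fa i ⊆ Fa j := by
    intro i j hij
    induction hij with
    | refl => exact Finset.Subset.refl _
    | @step k hk ih =>
      refine ih.trans ?_
      rw [hFa_succ]
      exact Finset.subset_union_left
  have hkey : ∀ i j, i < j → ∀ q ∈ Qn, g i • q ∈ Fa j := by
    intro i j hij q hq
    have h1 : g i • q ∈ Fa (i + 1) := by
      rw [hFa_succ]
      exact Finset.mem_union_right _ (Finset.mem_image_of_mem _ hq)
    exact hFmono _ _ hij h1
  refine ⟨E / 2, by linarith, g, ?_⟩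
  intro i j hij c hc c' hc'
  obtain ⟨q, hqN, hq⟩ := mem_iUnion₂.mp (hNcov hc)
  have hq' : q ∈ Qn := hNfin.mem_toFinset.mpr hqN
  have h1 : E ≤ dist (g j • c') (g i • q) := he (Fa j) c' hc' _ (hkey i j hij q hq')
  have h2 : dist (g i • c) (g i • q) = dist c q := hiso _ _ _
  have h3 := dist_triangle (g j • c') (g i • c) (g i • q)
  have h4 : dist c q < E / 4 := mem_ball.mp hq
  rw [dist_comm (g i • c) (g j • c')]
  linarith
end

section
/- Let ⫝ be a G-invariant ternary relation on subsets of a set X (G a group acting on X) satisfying full existence (for all A,B,C there is σ ∈ Stab(C) with σ(A) ⫝_C B) and right transitivity (A ⫝_C B together with A ⫝_{B∪C} D implies A ⫝_C (B ∪ D), for B ⊆ B∪C etc.). Then ⫝ satisfies extension: if A ⫝_C B and B ⊆ D, then there exists σ ∈ Stab(B∪C) such that σ(A) ⫝_C D. -/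
/-!
Full existence, applied over the base `B ∪ C`, gives `σ` fixing `B ∪ C` with `σ A ⫝_{B ∪ C} D`.
Since `σ` fixes `B` and `C` pointwise, invariance turns `A ⫝_C B` into `σ A ⫝_C B`, and right
transitivity combines the two into `σ A ⫝_C D ∪ B = D`.
-/

open Set

theorem image_smul_eq_self_of_subset {X G : Type*} [SMul G X] {σ : G} {S T : Set X}
    (hfix : ∀ x ∈ T, σ • x = x) (hS : S ⊆ T) : (fun x => σ • x) '' S = S :=
  EqOn.image_eq_self fun x hx => hfix x (hS hx)

/-- Fact 4.2(b): an invariant ternary relation satisfying full existence and right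
transitivity satisfies extension. -/
theorem extension_of_full_existence {X G : Type*} [Group G] [MulAction G X]
    (ind : Set X → Set X → Set X → Prop)
    (hinv : ∀ (σ : G) (A C B : Set X), ind A C B →
      ind ((fun x => σ • x) '' A) ((fun x => σ • x) '' C) ((fun x => σ • x) '' B))
    (hfull : ∀ A B C : Set X, ∃ σ : G, (∀ x ∈ C, σ • x = x) ∧
      ind ((fun x => σ • x) '' A) C B)
    (htrans : ∀ A B C D : Set X, ind A C B → ind A (B ∪ C) D → ind A C (D ∪ B)) :
    ∀ A B C D : Set X, ind A C B → B ⊆ D →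
      ∃ σ : G, (∀ x ∈ B ∪ C, σ • x = x) ∧ ind ((fun x => σ • x) '' A) C D := by
  intro A B C D hAB hBD
  obtain ⟨σ, hfix, hσD⟩ := hfull A D (B ∪ C)
  have hσB : ind ((fun x => σ • x) '' A) C B := by
    simpa only [image_smul_eq_self_of_subset hfix subset_union_left,
      image_smul_eq_self_of_subset hfix subset_union_right] using hinv σ A C B hAB
  refine ⟨σ, hfix, ?_⟩
  simpa only [union_eq_self_of_subset_right hBD] using htrans _ B C D hσB hσD
end
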